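/- Let Q be a proximity matrix satisfying the Enriques axioms (E1)–(E4) and let α̃ be a multiplicity vector for Q satisfying the terminal conditions of the canonical resolution. If ε_j = 1 and s_{jj} = −2 (so F_j is a (−1)-curve of the canonical resolution), then μ_j is odd, there is exactly one index i with q_{ji} = 1, and this index satisfies α̃_i = α̃_j and μ_i = μ_j + 1. (The branch curve has two infinitely near points of the same odd multiplicity μ_j at q_j.) -/

import Mathlib

/-
Because `Q` is a strictly upper triangular `0/1` matrix, `s_jj = -(1 + ∑ₘ q_jm)`, so `s_jj = -2`
says that row `j` of `Q` is a unit vector `e_i` (with `i > j`), and column `j` of `S` is then the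
difference of columns `i` and `j` of `N = 1 - Q`. Hence `γ̃_j = α̃_j - α̃_i`, which vanishes since
`F_j` is branched. Writing `α̃ = β̃ N` gives `μ = β̃ - (β̃ - ε) Q ≡ β̃ ≡ ε (mod 2)`, so `μ_j` is odd.
Finally, pairing column `j` of `S` with `ε` kills every branched `k ≠ j` (as `s_kj = 0`), leaving
`ε_j s_jj = -2`; this reads `(εQ)_i - (εQ)_j = 1 + ε_i`, and `ε_i = 0` because `s_ij = 1`.
-/

open Matrix Finset

/-- A proximity matrix: strictly upper triangular with entries `0` or `1`. -/
def IsProxMat {n : ℕ} (Q : Matrix (Fin n) (Fin n) ℤ) : Prop :=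
  (∀ i j : Fin n, ¬ i < j → Q i j = 0) ∧ (∀ i j : Fin n, Q i j = 0 ∨ Q i j = 1)

/-- `M = N⁻¹ = 1 + Q + ⋯ + Q^(n-1)`. -/
def Mmat {n : ℕ} (Q : Matrix (Fin n) (Fin n) ℤ) : Matrix (Fin n) (Fin n) ℤ :=
  ∑ k ∈ Finset.range n, Q ^ k

/-- The intersection matrix `S = -(1-Q)(1-Q)ᵀ` of the exceptional curves. -/
def Smat {n : ℕ} (Q : Matrix (Fin n) (Fin n) ℤ) : Matrix (Fin n) (Fin n) ℤ :=
  -((1 - Q) * (1 - Q)ᵀ)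

/-- The Enriques axioms (E1)–(E4) for a proximity matrix. -/
def EnriquesAxioms {n : ℕ} (Q : Matrix (Fin n) (Fin n) ℤ) : Prop :=
  (∀ j : Fin n, 0 < j.val → ∃ i : Fin n, i < j ∧ Q i j = 1) ∧
  (∀ j : Fin n, (Finset.univ.filter fun i => Q i j = 1).card ≤ 2) ∧
  (∀ i j k : Fin n, i < j → Q i k = 1 → Q j k = 1 → Q i j = 1) ∧
  (∀ i j : Fin n, i < j → ∀ k k' : Fin n,
    Q i k = 1 → Q j k = 1 → Q i k' = 1 → Q j k' = 1 → k = k')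

/-- A branch vector for `Q`: each `ε i ∈ {0,1}`, and `s_{ij}` is even whenever
`ε_i = ε_j = 1`. -/
def IsBranchVec {n : ℕ} (Q : Matrix (Fin n) (Fin n) ℤ) (ε : Fin n → ℤ) : Prop :=
  (∀ i, ε i = 0 ∨ ε i = 1) ∧ ∀ i j, ε i = 1 → ε j = 1 → 2 ∣ Smat Q i j

/-- The intersection matrix `T_{ij} = (2 - ε_i)(2 - ε_j) s_{ij} / 2` of the
exceptional curves `F_i` of the canonical resolution. -/
def Tmat {n : ℕ} (Q : Matrix (Fin n) (Fin n) ℤ) (ε : Fin n → ℤ) :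
    Matrix (Fin n) (Fin n) ℤ :=
  fun i j => (2 - ε i) * (2 - ε j) * Smat Q i j / 2

/-- The fiber vector `f_i = (1 + ε_i) m_{1i}` (with first blown-up point `i0`). -/
def fiberVec {n : ℕ} (Q : Matrix (Fin n) (Fin n) ℤ) (ε : Fin n → ℤ) (i0 : Fin n) :
    Fin n → ℤ :=
  fun i => (1 + ε i) * Mmat Q i0 i

/-- `z` is the fundamental cycle for the intersection matrix `T`: the
componentwise-least vector with `z_i ≥ 1` for all `i` and `(T z)_k ≤ 0` for all `k`. -/
def IsFundCycle {n : ℕ} (T : Matrix (Fin n) (Fin n) ℤ) (z : Fin n → ℤ) : Prop :=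
  (∀ i, 1 ≤ z i) ∧ (∀ k, (T *ᵥ z) k ≤ 0) ∧
  ∀ w : Fin n → ℤ, (∀ i, 1 ≤ w i) → (∀ k, (T *ᵥ w) k ≤ 0) → z ≤ w

/-- A multiplicity vector for `Q`: nonnegative entries satisfying the proximity
inequalities `α̃_i ≥ ∑_j q_{ij} α̃_j`. -/
def IsMultVec {n : ℕ} (Q : Matrix (Fin n) (Fin n) ℤ) (a : Fin n → ℤ) : Prop :=
  (∀ i, 0 ≤ a i) ∧ ∀ i, (∑ j, Q i j * a j) ≤ a i

/-- `β̃ = α̃ M`: multiplicities of the total transform of the branch curve. -/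
def betaVec {n : ℕ} (Q : Matrix (Fin n) (Fin n) ℤ) (a : Fin n → ℤ) : Fin n → ℤ :=
  a ᵥ* Mmat Q

/-- `γ̃ = α̃ Nᵀ`: intersection degrees of the proper transform of the branch curve
with the exceptional curves. -/
def gammaVec {n : ℕ} (Q : Matrix (Fin n) (Fin n) ℤ) (a : Fin n → ℤ) : Fin n → ℤ :=
  a ᵥ* (1 - Q)ᵀ

/-- `ε_i = β̃_i mod 2`: the branchedness of the `i`-th exceptional curve. -/
def epsVec {n : ℕ} (Q : Matrix (Fin n) (Fin n) ℤ) (a : Fin n → ℤ) : Fin n → ℤ :=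
  fun i => betaVec Q a i % 2

/-- `μ = α̃ + ε Q`: the multiplicities of the total branch curves at the blown-up
points. -/
def muVec {n : ℕ} (Q : Matrix (Fin n) (Fin n) ℤ) (a : Fin n → ℤ) : Fin n → ℤ :=
  fun i => a i + (epsVec Q a ᵥ* Q) i

/-- `α = μ - ε`. -/
def alphaVec {n : ℕ} (Q : Matrix (Fin n) (Fin n) ℤ) (a : Fin n → ℤ) : Fin n → ℤ :=
  fun i => muVec Q a i - epsVec Q a i

/-- The terminal conditions of the canonical resolution: `γ̃_i = 0` whenever
`ε_i = 1`; `s_{ij} = 0` whenever `i ≠ j` and `ε_i = ε_j = 1`; and `μ_i ≥ 2`. -/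
def TerminalConds {n : ℕ} (Q : Matrix (Fin n) (Fin n) ℤ) (a : Fin n → ℤ) : Prop :=
  (∀ i, epsVec Q a i = 1 → gammaVec Q a i = 0) ∧
  (∀ i j, i ≠ j → epsVec Q a i = 1 → epsVec Q a j = 1 → Smat Q i j = 0) ∧
  (∀ i, 2 ≤ muVec Q a i)

namespace Matrix

variable {R : Type*} [Semiring R] {n : ℕ} {Q : Matrix (Fin n) (Fin n) R}

theorem pow_apply_eq_zero_of_lt_add (hQ : ∀ i j : Fin n, ¬ i < j → Q i j = 0) (k : ℕ)
    {i j : Fin n} (h : (j : ℕ) < i + k) : (Q ^ k) i j = 0 := by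
  induction k generalizing j with
  | zero => exact one_apply_ne (by rintro rfl; omega)
  | succ k ih =>
    rw [pow_succ, mul_apply]
    refine Finset.sum_eq_zero fun l _ => ?_
    by_cases hl : (l : ℕ) < i + k
    · rw [ih hl, zero_mul]
    · rw [hQ l j (by rw [Fin.lt_def]; omega), mul_zero]

theorem pow_eq_zero_of_strictUpper (hQ : ∀ i j : Fin n, ¬ i < j → Q i j = 0) : Q ^ n = 0 := by
  ext i j
  exact pow_apply_eq_zero_of_lt_add hQ n (by omega)

theorem one_sub_apply_row {m : Type*} [DecidableEq m] {R : Type*} [Ring R] (A : Matrix m m R)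
    (j : m) : (1 - A) j = Pi.single j 1 - A j := by
  funext k
  simp [one_eq_pi_single]

end Matrix

section

variable {ι : Type*} {f : ι → ℤ}

theorem sum_eq_card_filter_eq_one [Fintype ι] (hf : ∀ x, f x = 0 ∨ f x = 1) :
    ∑ x, f x = #{x | f x = 1} := by
  rw [Finset.natCast_card_filter]
  refine Finset.sum_congr rfl fun x _ => ?_
  rcases hf x with h | h <;> simp [h]

theorem existsUnique_eq_one_of_sum_eq_one [Fintype ι] (hf : ∀ x, f x = 0 ∨ f x = 1)
    (hsum : ∑ x, f x = 1) : ∃! x, f x = 1 := by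
  rw [sum_eq_card_filter_eq_one hf, Nat.cast_eq_one, Finset.card_eq_one] at hsum
  obtain ⟨x, hx⟩ := hsum
  refine ⟨x, ?_, fun y hy => ?_⟩
  · simpa using hx.symm.subset (Finset.mem_singleton_self x)
  · have hy' : y ∈ ({x | f x = 1} : Finset ι) := by simpa using hy
    simpa [hx] using hy'

theorem eq_single_one_of_unique_eq_one [DecidableEq ι] (hf : ∀ x, f x = 0 ∨ f x = 1) {x : ι}
    (hx : f x = 1) (huniq : ∀ y, f y = 1 → y = x) : f = Pi.single x 1 := by
  funext y
  by_cases hy : y = x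
  · simp [hy, hx]
  · simpa [hy] using (hf y).resolve_right (mt (huniq y) hy)

end

section

variable {n : ℕ} {Q : Matrix (Fin n) (Fin n) ℤ} {i j : Fin n}

theorem Smat_apply (Q : Matrix (Fin n) (Fin n) ℤ) (k l : Fin n) :
    Smat Q k l = -((1 - Q) k ⬝ᵥ (1 - Q) l) := rfl

theorem Smat_apply_self (hjj : Q j j = 0) (hrow : ∀ m, Q j m = 0 ∨ Q j m = 1) :
    Smat Q j j = -(1 + ∑ m, Q j m) := by
  have hsq : Q j ⬝ᵥ Q j = ∑ m, Q j m :=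
    Finset.sum_congr rfl fun m _ => by rcases hrow m with h | h <;> simp [h]
  rw [Smat_apply, one_sub_apply_row, sub_dotProduct, dotProduct_sub, dotProduct_sub,
    single_dotProduct, single_dotProduct, dotProduct_single, hsq, hjj]
  simp

theorem Smat_apply_of_row_eq_single (hrow : Q j = Pi.single i 1) (k : Fin n) :
    Smat Q k j = (1 - Q) k i - (1 - Q) k j := by
  rw [Smat_apply, one_sub_apply_row Q j, hrow, dotProduct_sub, dotProduct_single,
    dotProduct_single]
  ring

theorem vecMul_Smat_apply_of_row_eq_single (hrow : Q j = Pi.single i 1) (v : Fin n → ℤ) :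
    (v ᵥ* Smat Q) j = (v ᵥ* (1 - Q)) i - (v ᵥ* (1 - Q)) j := by
  simp only [vecMul, dotProduct, Smat_apply_of_row_eq_single hrow, mul_sub,
    Finset.sum_sub_distrib]

theorem gammaVec_apply_of_row_eq_single (hrow : Q j = Pi.single i 1) (a : Fin n → ℤ) :
    gammaVec Q a j = a j - a i := by
  rw [gammaVec, vecMul_transpose, mulVec, one_sub_apply_row Q j, hrow, sub_dotProduct,
    single_dotProduct, single_dotProduct, one_mul, one_mul]

theorem Mmat_mul_one_sub (hQ : ∀ i j : Fin n, ¬ i < j → Q i j = 0) : Mmat Q * (1 - Q) = 1 := by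
  rw [Mmat, geom_sum_mul_neg, pow_eq_zero_of_strictUpper hQ, sub_zero]

theorem vecMul_apply_eq_add_one_of_row_eq_single {ε : Fin n → ℤ}
    (hε : ∀ k, ε k = 0 ∨ ε k = 1) (hQ : ∀ i j : Fin n, ¬ i < j → Q i j = 0)
    (hrow : Q j = Pi.single i 1) (hS : ∀ k, k ≠ j → ε k = 1 → Smat Q k j = 0)
    (hj : ε j = 1) (hjj : Smat Q j j = -2) : (ε ᵥ* Q) i = (ε ᵥ* Q) j + 1 := by
  have hji : j < i := by
    by_contra h
    simpa [hQ j i h] using congrFun hrow i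
  have hi : ε i = 0 := by
    refine (hε i).resolve_right fun hi => ?_
    have := hS i hji.ne' hi
    simp [Smat_apply_of_row_eq_single hrow, hQ i i (lt_irrefl i), hQ i j hji.not_gt,
      one_apply_ne hji.ne'] at this
  have hcol : (ε ᵥ* Smat Q) j = -2 := by
    rw [vecMul, dotProduct, Finset.sum_eq_single j, hj, hjj, one_mul]
    · intro k _ hkj
      rcases hε k with h | h
      · rw [h, zero_mul]
      · rw [hS k hkj h, mul_zero]
    · simp
  rw [vecMul_Smat_apply_of_row_eq_single hrow] at hcol
  simp only [vecMul_sub, vecMul_one, Pi.sub_apply] at hcol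
  linarith

theorem epsVec_eq_zero_or_one (Q : Matrix (Fin n) (Fin n) ℤ) (a : Fin n → ℤ) (i : Fin n) :
    epsVec Q a i = 0 ∨ epsVec Q a i = 1 :=
  Int.emod_two_eq _

theorem muVec_eq_betaVec_sub (hQ : ∀ i j : Fin n, ¬ i < j → Q i j = 0) (a : Fin n → ℤ) :
    muVec Q a = betaVec Q a - (betaVec Q a - epsVec Q a) ᵥ* Q := by
  have ha : betaVec Q a ᵥ* (1 - Q) = a := by
    rw [betaVec, vecMul_vecMul, Mmat_mul_one_sub hQ, vecMul_one]
  rw [vecMul_sub, vecMul_one] at ha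
  funext i
  have hai := congrFun ha i
  simp only [muVec, Pi.sub_apply, sub_vecMul] at hai ⊢
  linarith

theorem muVec_emod_two (hQ : ∀ i j : Fin n, ¬ i < j → Q i j = 0) (a : Fin n → ℤ) (i : Fin n) :
    muVec Q a i % 2 = epsVec Q a i := by
  have heven : 2 ∣ ((betaVec Q a - epsVec Q a) ᵥ* Q) i := by
    simp only [vecMul, dotProduct]
    exact Finset.dvd_sum fun k _ =>
      Dvd.dvd.mul_right (by simp only [Pi.sub_apply, epsVec]; omega) _
  rw [muVec_eq_betaVec_sub hQ, Pi.sub_apply]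
  simp only [epsVec] at heven ⊢
  omega

end

theorem minus_one_curve_of_branch_multiplicities_general
    (n : ℕ) (Q : Matrix (Fin n) (Fin n) ℤ)
    (hQ : IsProxMat Q)
    (a : Fin n → ℤ) (hterm : TerminalConds Q a)
    (j : Fin n) (h1 : epsVec Q a j = 1) (h2 : Smat Q j j = -2) :
    Odd (muVec Q a j) ∧ (∃! i : Fin n, Q j i = 1) ∧
    ∀ i : Fin n, Q j i = 1 → a i = a j ∧ muVec Q a i = muVec Q a j + 1 := by
  obtain ⟨hQ0, hQ01⟩ := hQ
  obtain ⟨hγ, hS, -⟩ := hterm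
  have hrowsum : ∑ m, Q j m = 1 := by
    rw [Smat_apply_self (hQ0 j j (lt_irrefl j)) (hQ01 j)] at h2
    linarith
  obtain ⟨i, hi, huniq⟩ := existsUnique_eq_one_of_sum_eq_one (hQ01 j) hrowsum
  have hrow : Q j = Pi.single i 1 := eq_single_one_of_unique_eq_one (hQ01 j) hi huniq
  have ha : a i = a j := by
    have := hγ j h1
    rw [gammaVec_apply_of_row_eq_single hrow] at this
    linarith
  have hμ : muVec Q a i = muVec Q a j + 1 := by
    have := vecMul_apply_eq_add_one_of_row_eq_single (epsVec_eq_zero_or_one Q a) hQ0 hrow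
      (fun k hk hεk => hS k j hk hεk h1) h1 h2
    simp only [muVec]
    linarith
  refine ⟨?_, ⟨i, hi, huniq⟩, fun i' hi' => huniq i' hi' ▸ ⟨ha, hμ⟩⟩
  rw [Int.odd_iff, muVec_emod_two hQ0, h1]

/-- If `ε_j = 1` and `s_{jj} = -2` (so `F_j` is a `(-1)`-curve of
the canonical resolution), then `μ_j` is odd, there is exactly one index `i` with
`q_{ji} = 1`, and this index satisfies `α̃_i = α̃_j` and `μ_i = μ_j + 1` (the branch
curve has two infinitely near points of the same odd multiplicity `μ_j` at `q_j`). -/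
theorem minus_one_curve_of_branch_multiplicities
    (n : ℕ) (hn : 1 ≤ n) (Q : Matrix (Fin n) (Fin n) ℤ)
    (hQ : IsProxMat Q) (hE : EnriquesAxioms Q)
    (a : Fin n → ℤ) (ha : IsMultVec Q a) (hterm : TerminalConds Q a)
    (j : Fin n) (h1 : epsVec Q a j = 1) (h2 : Smat Q j j = -2) :
    Odd (muVec Q a j) ∧ (∃! i : Fin n, Q j i = 1) ∧
    ∀ i : Fin n, Q j i = 1 → a i = a j ∧ muVec Q a i = muVec Q a j + 1 :=
  minus_one_curve_of_branch_multiplicities_general n Q hQ a hterm j h1 h2
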